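/- arXiv:1012.4144 — 2 statements merged into one kernel-verified Lean document; each statement's English description precedes it below -/
import Mathlib

section
/- For real s ∈ (-1, 1), the principal value integral over θ ∈ [-π/2, π/2] of 1/(s - sin θ) dθ equals 0. -/
/-!
Put `α = arcsin s`. Since `sin α - sin θ = 2 sin ((α - θ) / 2) cos ((α + θ) / 2)`, the function
`F θ = (log cos ((α + θ) / 2) - log |sin ((α - θ) / 2)|) / cos α` is a primitive of
`1 / (sin α - sin θ)` on either side of `θ = α`, and it vanishes at `±π / 2`. On
`[-π / 2, π / 2]`, `|sin θ - s| ≤ ε` means `θ ∈ [a, b]` with `a = arcsin (s - ε)`,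
`b = arcsin (s + ε)`, so the truncated integral is `F a - F b`. At both `a` and `b` we have
`|sin α - sin θ| = ε`, so the logarithmic singularities of `F` cancel and
`F a - F b = 2 (log cos ((α + a) / 2) - log cos ((α + b) / 2)) / cos α`, which tends to `0` as
`a, b → α`.
-/

open Real Filter Set MeasureTheory Topology

theorem sin_ne_sin_iff {α θ : ℝ} :
    sin α ≠ sin θ ↔ sin ((α - θ) / 2) ≠ 0 ∧ cos ((α + θ) / 2) ≠ 0 := by
  rw [← sub_ne_zero, sin_sub_sin, mul_ne_zero_iff, mul_ne_zero_iff]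
  simp

/-- `Real.log x = log |x|`, so this is a primitive on both sides of `θ = α`. -/
noncomputable def sinKernelPrimitive (α θ : ℝ) : ℝ :=
  (log (cos ((α + θ) / 2)) - log (sin ((α - θ) / 2))) / cos α

theorem hasDerivAt_sinKernelPrimitive {α θ : ℝ} (hα : cos α ≠ 0) (hθ : sin α ≠ sin θ) :
    HasDerivAt (sinKernelPrimitive α) (1 / (sin α - sin θ)) θ := by
  obtain ⟨hs, hc⟩ := sin_ne_sin_iff.1 hθ
  have hu : HasDerivAt (fun x => (α + x) / 2) (1 / 2) θ := by
    simpa using ((hasDerivAt_id θ).const_add α).div_const 2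
  have hw : HasDerivAt (fun x => (α - x) / 2) (-1 / 2) θ := by
    simpa using ((hasDerivAt_id θ).const_sub α).div_const 2
  have hF := ((((hasDerivAt_cos _).comp θ hu).log hc).sub
    (((hasDerivAt_sin _).comp θ hw).log hs)).div_const (cos α)
  simp only [Function.comp_def] at hF
  refine hF.congr_deriv ?_
  have hcos : cos α = cos ((α + θ) / 2 + (α - θ) / 2) := by ring_nf
  rw [cos_add] at hcos
  rw [sin_sub_sin]
  field_simp
  linear_combination -hcos

theorem sinKernelPrimitive_neg_pi_div_two (α : ℝ) : sinKernelPrimitive α (-(π / 2)) = 0 := by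
  have h : (α - -(π / 2)) / 2 = (α + -(π / 2)) / 2 + π / 2 := by ring
  rw [sinKernelPrimitive, h, sin_add_pi_div_two, sub_self, zero_div]

theorem sinKernelPrimitive_pi_div_two (α : ℝ) : sinKernelPrimitive α (π / 2) = 0 := by
  have h : (α + π / 2) / 2 = (α - π / 2) / 2 + π / 2 := by ring
  rw [sinKernelPrimitive, h, cos_add_pi_div_two, log_neg_eq_log, sub_self, zero_div]

theorem intervalIntegrable_one_div_sub_sin {s a b : ℝ} (h : ∀ θ ∈ uIcc a b, sin θ ≠ s) :
    IntervalIntegrable (fun θ => 1 / (s - sin θ)) volume a b :=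
  (continuousOn_const.div (continuous_const.sub continuous_sin).continuousOn
    fun θ hθ => sub_ne_zero.2 (h θ hθ).symm).intervalIntegrable

theorem integral_one_div_sin_sub_sin {α a b : ℝ} (hα : cos α ≠ 0)
    (h : ∀ θ ∈ uIcc a b, sin θ ≠ sin α) :
    ∫ θ in a..b, 1 / (sin α - sin θ) = sinKernelPrimitive α b - sinKernelPrimitive α a :=
  intervalIntegral.integral_eq_sub_of_hasDerivAt
    (fun θ hθ => hasDerivAt_sinKernelPrimitive hα (h θ hθ).symm)
    (intervalIntegrable_one_div_sub_sin h)

theorem sinKernelPrimitive_eq {α θ : ℝ} (hθ : sin α ≠ sin θ) :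
    sinKernelPrimitive α θ =
      (2 * log (cos ((α + θ) / 2)) - log (sin α - sin θ) + log 2) / cos α := by
  obtain ⟨hs, hc⟩ := sin_ne_sin_iff.1 hθ
  rw [sinKernelPrimitive, sin_sub_sin, log_mul (mul_ne_zero two_ne_zero hs) hc,
    log_mul two_ne_zero hs]
  ring

theorem intervalIntegral_eq_add_of_eqOn_zero {E : Type*} [NormedAddCommGroup E]
    [NormedSpace ℝ E] {f g : ℝ → E} {a b c d : ℝ} (hl : EqOn g f (uIoo a b))
    (hm : EqOn g 0 (uIcc b c)) (hr : EqOn g f (uIoo c d))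
    (hfl : IntervalIntegrable f volume a b) (hfr : IntervalIntegrable f volume c d) :
    ∫ x in a..d, g x = (∫ x in a..b, f x) + ∫ x in c..d, f x := by
  have hgl : IntervalIntegrable g volume a b := hfl.congr_uIoo hl.symm
  have hgm : IntervalIntegrable g volume b c :=
    intervalIntegrable_const.congr_uIoo fun x hx => (hm (uIoo_subset_uIcc_self hx)).symm
  have hgr : IntervalIntegrable g volume c d := hfr.congr_uIoo hr.symm
  rw [← intervalIntegral.integral_add_adjacent_intervals (hgl.trans hgm) hgr,
    ← intervalIntegral.integral_add_adjacent_intervals hgl hgm,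
    intervalIntegral.integral_congr_uIoo hl, intervalIntegral.integral_congr_uIoo hr,
    intervalIntegral.integral_congr hm]
  simp

theorem lt_abs_sin_sub_iff {s ε θ : ℝ} (hθ : θ ∈ Icc (-(π / 2)) (π / 2))
    (hl : s - ε ∈ Icc (-1 : ℝ) 1) (hr : s + ε ∈ Icc (-1 : ℝ) 1) :
    ε < |sin θ - s| ↔ θ < arcsin (s - ε) ∨ arcsin (s + ε) < θ := by
  rw [lt_abs, or_comm, lt_arcsin_iff_sin_lt hθ hl, arcsin_lt_iff_lt_sin hr hθ]
  exact Iff.or ⟨fun h => by linarith, fun h => by linarith⟩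
    ⟨fun h => by linarith, fun h => by linarith⟩

theorem integral_truncated_one_div_sub_sin {s ε : ℝ} (hε : 0 < ε) (hε₁ : -1 ≤ s - ε)
    (hε₂ : s + ε ≤ 1) :
    ∫ θ in (-(π / 2))..(π / 2), (if ε < |sin θ - s| then 1 / (s - sin θ) else 0) =
      sinKernelPrimitive (arcsin s) (arcsin (s - ε)) -
        sinKernelPrimitive (arcsin s) (arcsin (s + ε)) := by
  have hl : s - ε ∈ Icc (-1 : ℝ) 1 := ⟨hε₁, by linarith⟩
  have hr : s + ε ∈ Icc (-1 : ℝ) 1 := ⟨by linarith, hε₂⟩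
  obtain ⟨α, hα, rfl⟩ : ∃ α ∈ Ioo (-(π / 2)) (π / 2), sin α = s :=
    ⟨arcsin s, ⟨neg_pi_div_two_lt_arcsin.2 (by linarith), arcsin_lt_pi_div_two.2 (by linarith)⟩,
      sin_arcsin (by linarith) (by linarith)⟩
  set a := arcsin (sin α - ε)
  set b := arcsin (sin α + ε)
  have hcos : cos α ≠ 0 := (cos_pos_of_mem_Ioo hα).ne'
  have hla : -(π / 2) ≤ a := neg_pi_div_two_le_arcsin _
  have hbr : b ≤ π / 2 := arcsin_le_pi_div_two _
  have hab : a ≤ b := arcsin_le_arcsin (by linarith)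
  have hL : ∀ θ ∈ uIcc (-(π / 2)) a, sin θ ≠ sin α := by
    rw [uIcc_of_le hla]
    intro θ hθ
    have := (le_arcsin_iff_sin_le ⟨hθ.1, hθ.2.trans (arcsin_le_pi_div_two _)⟩ hl).1 hθ.2
    linarith
  have hR : ∀ θ ∈ uIcc b (π / 2), sin θ ≠ sin α := by
    rw [uIcc_of_le hbr]
    intro θ hθ
    have := (arcsin_le_iff_le_sin hr ⟨(neg_pi_div_two_le_arcsin _).trans hθ.1, hθ.2⟩).1 hθ.1
    linarith
  rw [intervalIntegral_eq_add_of_eqOn_zero (f := fun θ => 1 / (sin α - sin θ)) (b := a) (c := b)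
      ?left ?middle ?right (intervalIntegrable_one_div_sub_sin hL)
      (intervalIntegrable_one_div_sub_sin hR),
    integral_one_div_sin_sub_sin hcos hL, integral_one_div_sin_sub_sin hcos hR,
    sinKernelPrimitive_neg_pi_div_two, sinKernelPrimitive_pi_div_two, arcsin_sin hα.1.le hα.2.le]
  · ring
  case left =>
    rw [uIoo_of_le hla]
    intro θ hθ
    have hθ' : θ ∈ Icc (-(π / 2)) (π / 2) := ⟨hθ.1.le, hθ.2.le.trans (hab.trans hbr)⟩
    exact if_pos ((lt_abs_sin_sub_iff hθ' hl hr).2 (Or.inl hθ.2))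
  case middle =>
    rw [uIcc_of_le hab]
    intro θ hθ
    have hθ' : θ ∈ Icc (-(π / 2)) (π / 2) := ⟨hla.trans hθ.1, hθ.2.trans hbr⟩
    refine if_neg fun h => ?_
    rcases (lt_abs_sin_sub_iff hθ' hl hr).1 h with h | h <;> linarith [hθ.1, hθ.2]
  case right =>
    rw [uIoo_of_le hbr]
    intro θ hθ
    have hθ' : θ ∈ Icc (-(π / 2)) (π / 2) := ⟨hla.trans (hab.trans hθ.1.le), hθ.2.le⟩
    exact if_pos ((lt_abs_sin_sub_iff hθ' hl hr).2 (Or.inr hθ.1))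

theorem eventually_neg_one_le_sub_and_add_le_one {s : ℝ} (hs : s ∈ Ioo (-1 : ℝ) 1) :
    ∀ᶠ ε in 𝓝[>] 0, 0 < ε ∧ -1 ≤ s - ε ∧ s + ε ≤ 1 := by
  filter_upwards [Ioo_mem_nhdsGT (lt_min (sub_pos.2 hs.2) (neg_lt_iff_pos_add'.1 hs.1))]
    with ε ⟨hε, hεs⟩
  exact ⟨hε, by linarith [min_le_right (1 - s) (1 + s)], by linarith [min_le_left (1 - s) (1 + s)]⟩

theorem tendsto_sinKernelPrimitive_arcsin_sub {s : ℝ} (hs : s ∈ Ioo (-1 : ℝ) 1) :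
    Tendsto (fun ε => sinKernelPrimitive (arcsin s) (arcsin (s - ε)) -
      sinKernelPrimitive (arcsin s) (arcsin (s + ε))) (𝓝[>] 0) (𝓝 0) := by
  have hcos : cos (arcsin s) ≠ 0 :=
    (cos_pos_of_mem_Ioo ⟨neg_pi_div_two_lt_arcsin.2 hs.1, arcsin_lt_pi_div_two.2 hs.2⟩).ne'
  have hcont : ContinuousAt (fun x => log (cos ((arcsin s + arcsin x) / 2))) s :=
    ContinuousAt.log (by fun_prop) (by rwa [add_self_div_two])
  have hlim := (((hcont.tendsto.comp ((continuous_sub_left s).tendsto' 0 s (sub_zero s))).sub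
    (hcont.tendsto.comp ((continuous_const_add s).tendsto' 0 s (add_zero s)))).const_mul 2).div_const
      (cos (arcsin s))
  simp only [sub_self, mul_zero, zero_div] at hlim
  refine (tendsto_nhdsWithin_of_tendsto_nhds hlim).congr' ?_
  filter_upwards [eventually_neg_one_le_sub_and_add_le_one hs] with ε ⟨hε, hε₁, hε₂⟩
  have hsin : sin (arcsin s) = s := sin_arcsin hs.1.le hs.2.le
  have hsin₁ : sin (arcsin (s - ε)) = s - ε := sin_arcsin hε₁ (by linarith)
  have hsin₂ : sin (arcsin (s + ε)) = s + ε := sin_arcsin (by linarith) hε₂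
  rw [sinKernelPrimitive_eq (by rw [hsin, hsin₁]; linarith),
    sinKernelPrimitive_eq (by rw [hsin, hsin₂]; linarith), hsin, hsin₁, hsin₂,
    sub_sub_cancel, sub_add_cancel_left, log_neg_eq_log]
  simp only [Function.comp_apply]
  ring

theorem pv_integral_one_div_sub_sin_eq_zero (s : ℝ) (hs : s ∈ Set.Ioo (-1 : ℝ) 1) :
    Tendsto (fun ε : ℝ =>
        ∫ θ in (-(π / 2))..(π / 2),
          if ε < |Real.sin θ - s| then 1 / (s - Real.sin θ) else 0)
      (nhdsWithin 0 (Set.Ioi 0)) (nhds 0) := by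
  refine (tendsto_sinKernelPrimitive_arcsin_sub hs).congr' ?_
  filter_upwards [eventually_neg_one_le_sub_and_add_le_one hs] with ε ⟨hε, hε₁, hε₂⟩
  exact (integral_truncated_one_div_sub_sin hε hε₁ hε₂).symm
end

section
/- For s ∈ (-1, 1), the principal value integral over x ∈ [-1, 1] of 1/((s - x)·√(1 - x²)) dx equals 0. -/
/-!
Put `t = √(1 - s²)`. The function
`F x = (log (1 - s x + t √(1 - x²)) - log |x - s|) / t`
is a primitive of `1 / ((s - x) √(1 - x²))` on `[-1, 1] \ {s}` and vanishes at `±1`, so the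
truncated integral equals `F (s - ε) - F (s + ε)`. In this difference the singular terms `log ε`
cancel, and what is left tends to `0` by continuity. Integrability needs no estimate: on each side
of `s` the integrand has constant sign, so it is the derivative of a monotone continuous function.
-/

open Real Filter Set Topology

namespace intervalIntegral

variable {f f' : ℝ → ℝ} {a b : ℝ}

theorem integral_eq_sub_of_hasDerivAt_of_nonneg (hab : a ≤ b) (hcont : ContinuousOn f (Icc a b))
    (hderiv : ∀ x ∈ Ioo a b, HasDerivAt f (f' x) x) (hpos : ∀ x ∈ Ioo a b, 0 ≤ f' x) :
    ∫ y in a..b, f' y = f b - f a :=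
  integral_eq_sub_of_hasDerivAt_of_le hab hcont hderiv
    ((intervalIntegrable_iff_integrableOn_Ioc_of_le hab).2
      (integrableOn_deriv_of_nonneg hcont hderiv hpos))

theorem integral_eq_sub_of_hasDerivAt_of_nonpos (hab : a ≤ b) (hcont : ContinuousOn f (Icc a b))
    (hderiv : ∀ x ∈ Ioo a b, HasDerivAt f (f' x) x) (hneg : ∀ x ∈ Ioo a b, f' x ≤ 0) :
    ∫ y in a..b, f' y = f b - f a := by
  have h := integral_eq_sub_of_hasDerivAt_of_nonneg (f := -f) (f' := fun x => -f' x) hab hcont.neg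
    (fun x hx => (hderiv x hx).neg) (fun x hx => neg_nonneg.2 (hneg x hx))
  rw [intervalIntegral.integral_neg, Pi.neg_apply, Pi.neg_apply] at h
  linarith

end intervalIntegral

theorem hasDerivAt_sqrt_one_sub_sq {x : ℝ} (hx : 1 - x ^ 2 ≠ 0) :
    HasDerivAt (fun y => √(1 - y ^ 2)) (-x / √(1 - x ^ 2)) x := by
  convert ((hasDerivAt_pow 2 x).const_sub 1).sqrt hx using 1
  field_simp
  ring

namespace ChebyshevHilbert

noncomputable def logArg (s x : ℝ) : ℝ := 1 - s * x + √(1 - s ^ 2) * √(1 - x ^ 2)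

/-- `log (x - s)` is `log |x - s|`, by the convention `Real.log x = Real.log |x|`. -/
noncomputable def primitive (s x : ℝ) : ℝ := (log (logArg s x) - log (x - s)) / √(1 - s ^ 2)

variable {s : ℝ}

theorem continuous_logArg : Continuous (logArg s) := by
  unfold logArg
  fun_prop

theorem logArg_pos (hs : s ∈ Ioo (-1 : ℝ) 1) {x : ℝ} (hx : x ∈ Icc (-1 : ℝ) 1) :
    0 < logArg s x := by
  have hsx : s * x < 1 := (le_abs_self _).trans_lt <| by
    rw [abs_mul]
    exact mul_lt_one_of_nonneg_of_lt_one_left (abs_nonneg s) (abs_lt.2 hs) (abs_le.2 hx)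
  have : 0 ≤ √(1 - s ^ 2) * √(1 - x ^ 2) := by positivity
  unfold logArg
  linarith

theorem continuousAt_primitive (hs : s ∈ Ioo (-1 : ℝ) 1) {x : ℝ} (hx : x ∈ Icc (-1 : ℝ) 1)
    (hxs : x ≠ s) : ContinuousAt (primitive s) x := by
  have hlog : ContinuousAt (fun y => log (logArg s y)) x :=
    continuous_logArg.continuousAt.log (logArg_pos hs hx).ne'
  have hlog' : ContinuousAt (fun y => log (y - s)) x :=
    (continuous_sub_right s).continuousAt.log (sub_ne_zero.2 hxs)
  exact (hlog.sub hlog').div_const _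

theorem hasDerivAt_primitive (hs : s ∈ Ioo (-1 : ℝ) 1) {x : ℝ} (hx : x ∈ Ioo (-1 : ℝ) 1)
    (hxs : x ≠ s) : HasDerivAt (primitive s) (1 / ((s - x) * √(1 - x ^ 2))) x := by
  have hs2 : 0 < 1 - s ^ 2 := by nlinarith [hs.1, hs.2]
  have hx2 : 0 < 1 - x ^ 2 := by nlinarith [hx.1, hx.2]
  set t := √(1 - s ^ 2)
  set r := √(1 - x ^ 2)
  have ht : 0 < t := sqrt_pos.2 hs2
  have hr : 0 < r := sqrt_pos.2 hx2
  have ht2 : t ^ 2 = 1 - s ^ 2 := sq_sqrt hs2.le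
  have hr2 : r ^ 2 = 1 - x ^ 2 := sq_sqrt hx2.le
  have hD : logArg s x ≠ 0 := (logArg_pos hs (Ioo_subset_Icc_self hx)).ne'
  have hlogArg : HasDerivAt (logArg s) (-s + t * (-x / r)) x := by
    have h := ((hasDerivAt_mul_const s).const_sub 1).add
      ((hasDerivAt_sqrt_one_sub_sq hx2.ne').const_mul t)
    simp only [mul_comm _ s] at h
    exact h
  have hlog' : HasDerivAt (fun y => log (y - s)) (1 / (x - s)) x := by
    simpa using ((hasDerivAt_id x).sub_const s).log (sub_ne_zero.2 hxs)
  refine (((hlogArg.log hD).sub hlog').div_const t).congr_deriv ?_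
  have hsx : s - x ≠ 0 := sub_ne_zero.2 hxs.symm
  have hxs' : x - s ≠ 0 := sub_ne_zero.2 hxs
  have hD' : 1 - s * x + t * r ≠ 0 := hD
  rw [show logArg s x = 1 - s * x + t * r from rfl]
  field_simp
  linear_combination (t * (x - s)) * hr2 - (r * (x - s)) * ht2

theorem primitive_neg_one : primitive s (-1) = 0 := by
  rw [primitive, show (-1 : ℝ) - s = -(1 + s) by ring, log_neg_eq_log]
  simp [logArg]

theorem primitive_one : primitive s 1 = 0 := by
  simp [primitive, logArg]

theorem primitive_sub_sub_primitive_add (ε : ℝ) :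
    primitive s (s - ε) - primitive s (s + ε) =
      (log (logArg s (s - ε)) - log (logArg s (s + ε))) / √(1 - s ^ 2) := by
  simp only [primitive, sub_sub_cancel_left, add_sub_cancel_left, log_neg_eq_log]
  ring

theorem tendsto_primitive_sub_sub_primitive_add (hs : s ∈ Ioo (-1 : ℝ) 1) :
    Tendsto (fun ε => primitive s (s - ε) - primitive s (s + ε)) (𝓝 0) (𝓝 0) := by
  simp only [primitive_sub_sub_primitive_add]
  have hD : logArg s s ≠ 0 := (logArg_pos hs (Ioo_subset_Icc_self hs)).ne'
  have hleft : ContinuousAt (fun ε => log (logArg s (s - ε))) 0 :=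
    (continuous_logArg.comp (continuous_sub_left s)).continuousAt.log (by simpa using hD)
  have hright : ContinuousAt (fun ε => log (logArg s (s + ε))) 0 :=
    (continuous_logArg.comp (continuous_const_add s)).continuousAt.log (by simpa using hD)
  simpa using ((hleft.sub hright).div_const (√(1 - s ^ 2))).tendsto

theorem integral_eq_primitive_sub_of_lt (hs : s ∈ Ioo (-1 : ℝ) 1) {a b : ℝ} (ha : -1 ≤ a)
    (hab : a ≤ b) (hbs : b < s) :
    ∫ x in a..b, 1 / ((s - x) * √(1 - x ^ 2)) = primitive s b - primitive s a := by
  refine intervalIntegral.integral_eq_sub_of_hasDerivAt_of_nonneg hab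
    (fun x hx => (continuousAt_primitive hs ⟨by linarith [hx.1], by linarith [hx.2, hs.2]⟩
      (by linarith [hx.2])).continuousWithinAt)
    (fun x hx => hasDerivAt_primitive hs ⟨by linarith [hx.1], by linarith [hx.2, hs.2]⟩
      (by linarith [hx.2]))
    (fun x hx => ?_)
  have : 0 ≤ s - x := by linarith [hx.2]
  positivity

theorem integral_eq_primitive_sub_of_gt (hs : s ∈ Ioo (-1 : ℝ) 1) {a b : ℝ} (hsa : s < a)
    (hab : a ≤ b) (hb : b ≤ 1) :
    ∫ x in a..b, 1 / ((s - x) * √(1 - x ^ 2)) = primitive s b - primitive s a := by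
  refine intervalIntegral.integral_eq_sub_of_hasDerivAt_of_nonpos hab
    (fun x hx => (continuousAt_primitive hs ⟨by linarith [hx.1, hs.1], by linarith [hx.2]⟩
      (by linarith [hx.1])).continuousWithinAt)
    (fun x hx => hasDerivAt_primitive hs ⟨by linarith [hx.1, hs.1], by linarith [hx.2]⟩
      (by linarith [hx.1]))
    (fun x hx => one_div_nonpos.2 (mul_nonpos_of_nonpos_of_nonneg ?_ (sqrt_nonneg _)))
  linarith [hx.1]

end ChebyshevHilbert

open ChebyshevHilbert in
theorem pv_integral_one_div_sqrt_eq_zero (s : ℝ) (hs : s ∈ Set.Ioo (-1 : ℝ) 1) :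
    Tendsto (fun ε : ℝ =>
        (∫ x in (-1 : ℝ)..(s - ε), 1 / ((s - x) * Real.sqrt (1 - x ^ 2))) +
          ∫ x in (s + ε)..(1 : ℝ), 1 / ((s - x) * Real.sqrt (1 - x ^ 2)))
      (nhdsWithin 0 (Set.Ioi 0)) (nhds 0) := by
  have hδ : 0 < min (1 + s) (1 - s) := lt_min (by linarith [hs.1]) (by linarith [hs.2])
  refine ((tendsto_primitive_sub_sub_primitive_add hs).mono_left nhdsWithin_le_nhds).congr' ?_
  filter_upwards [Ioo_mem_nhdsGT hδ] with ε ⟨hε, hεδ⟩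
  have hε₁ : ε ≤ 1 + s := hεδ.le.trans (min_le_left _ _)
  have hε₂ : ε ≤ 1 - s := hεδ.le.trans (min_le_right _ _)
  rw [integral_eq_primitive_sub_of_lt hs le_rfl (by linarith) (by linarith),
    integral_eq_primitive_sub_of_gt hs (by linarith) (by linarith) le_rfl,
    primitive_neg_one, primitive_one]
  ring
end
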